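/- arXiv:2210.02581 — 2 statements merged into one kernel-verified Lean document; each statement's English description precedes it below -/
import Mathlib

section
/- Let n ≥ 1 and 2 ≤ p < ∞. Then for every ξ, η ∈ ℝ^n one has ⟨H_{p−1}(ξ) − H_{p−1}(η), ξ − η⟩ ≥ (4/p²) |H_{p/2}(ξ) − H_{p/2}(η)|². -/
open MeasureTheory Set ENNReal
open scoped Classical

noncomputable section

/-- `H_λ(ξ) = (|ξ| - 1)_+^λ · ξ/|ξ|`, with `H_λ(0) = 0`. -/
def Hfun {n : ℕ} (lam : ℝ) (ξ : EuclideanSpace ℝ (Fin n)) : EuclideanSpace ℝ (Fin n) :=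
  if ξ = 0 then 0 else ((max (‖ξ‖ - 1) 0) ^ lam / ‖ξ‖) • ξ

/-! For a radial field `x ↦ φ(|x|) x/|x|`, both sides of the inequality are affine in
`s = ⟨ξ, η⟩` once `a = |ξ|` and `b = |η|` are fixed, and `|s| ≤ ab`. So it suffices to check the
extreme cases `s = ±ab`, where `ξ` and `η` are collinear and the inequality reduces to the scalar
ones `c (g a ∓ g b)² ≤ (f a ∓ f b)(a ∓ b)` for the two profiles `f`, `g`. For
`f = (t - 1)_+^{p-1}`, `g = (t - 1)_+^{p/2}` these follow from the classical
`(4/p²)(u^{p/2} - v^{p/2})² ≤ (u^{p-1} - v^{p-1})(u - v)` (a mean value bound for `t^{p/2}`) and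
from Cauchy–Schwarz, because `t ↦ (t - 1)_+` is monotone, `1`-Lipschitz and below the identity. -/

open scoped RealInnerProductSpace

lemma rpow_sub_rpow_le_mul_rpow_sub_one {r u v : ℝ} (hr : 1 ≤ r) (hv : 0 ≤ v) (hvu : v ≤ u) :
    u ^ r - v ^ r ≤ r * u ^ (r - 1) * (u - v) := by
  rcases (hv.trans hvu).eq_or_lt with rfl | hu
  · simp [le_antisymm hvu hv]
  have hbern := one_add_mul_self_le_rpow_one_add (s := v / u - 1) (by
    rw [le_sub_iff_add_le, neg_add_cancel]; positivity) hr
  rw [add_sub_cancel, Real.div_rpow hv hu.le, le_div_iff₀ (by positivity)] at hbern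
  rw [Real.rpow_sub_one hu.ne']
  have : r * (u ^ r / u) * (u - v) = -(r * (v / u - 1)) * u ^ r := by
    field_simp
    ring
  linarith

lemma four_div_sq_mul_sq_rpow_sub_le {p u v : ℝ} (hp : 2 ≤ p) (hv : 0 ≤ v) (hvu : v ≤ u) :
    4 / p ^ 2 * (u ^ (p / 2) - v ^ (p / 2)) ^ 2 ≤ (u ^ (p - 1) - v ^ (p - 1)) * (u - v) := by
  rcases (hv.trans hvu).eq_or_lt with rfl | hu
  · simp [le_antisymm hvu hv]
  have hmvt := rpow_sub_rpow_le_mul_rpow_sub_one (r := p / 2) (by linarith) hv hvu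
  have hsq : (u ^ (p / 2 - 1)) ^ 2 = u ^ (p - 2) := by
    rw [← Real.rpow_natCast, ← Real.rpow_mul hu.le]
    ring_nf
  have hu1 : u ^ (p - 1) = u ^ (p - 2) * u := by
    rw [← Real.rpow_add_one hu.ne']
    ring_nf
  have hv1 : v ^ (p - 1) = v ^ (p - 2) * v := by
    rw [← Real.rpow_add_one' hv (by linarith)]
    ring_nf
  have hmono : v ^ (p - 2) ≤ u ^ (p - 2) := Real.rpow_le_rpow hv hvu (by linarith)
  calc 4 / p ^ 2 * (u ^ (p / 2) - v ^ (p / 2)) ^ 2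
      ≤ 4 / p ^ 2 * (p / 2 * u ^ (p / 2 - 1) * (u - v)) ^ 2 := by
        gcongr
        exact sub_nonneg.2 (Real.rpow_le_rpow hv hvu (by linarith))
    _ = u ^ (p - 2) * (u - v) * (u - v) := by
        rw [mul_pow, mul_pow, hsq]
        field_simp
        ring
    _ ≤ (u ^ (p - 1) - v ^ (p - 1)) * (u - v) := by
        gcongr
        rw [hu1, hv1]
        linarith [mul_le_mul_of_nonneg_left hmono hv]

lemma sq_rpow_half_add_le {p u v : ℝ} (hp : p ≠ 0) (hu : 0 ≤ u) (hv : 0 ≤ v) :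
    (u ^ (p / 2) + v ^ (p / 2)) ^ 2 ≤ (u ^ (p - 1) + v ^ (p - 1)) * (u + v) := by
  have hsplit : ∀ t : ℝ, 0 ≤ t →
      t ^ (p / 2) = t ^ ((p - 1) / 2) * √t ∧ t ^ (p - 1) = (t ^ ((p - 1) / 2)) ^ 2 := by
    intro t ht
    rw [Real.sqrt_eq_rpow, ← Real.rpow_add' ht (by contrapose! hp; linarith), ← Real.rpow_natCast,
      ← Real.rpow_mul ht]
    constructor <;> ring_nf
  obtain ⟨hu₁, hu₂⟩ := hsplit u hu
  obtain ⟨hv₁, hv₂⟩ := hsplit v hv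
  rw [hu₁, hu₂, hv₁, hv₂]
  nlinarith [sq_nonneg (u ^ ((p - 1) / 2) * √v - v ^ ((p - 1) / 2) * √u), Real.sq_sqrt hu,
    Real.sq_sqrt hv]

lemma sub_mul_nonneg_of_abs_le {A B m s : ℝ} (hm : 0 ≤ A - B * m) (hm' : 0 ≤ A + B * m)
    (hs : |s| ≤ m) : 0 ≤ A - B * s := by
  obtain ⟨hs₁, hs₂⟩ := abs_le.mp hs
  rcases le_total 0 B with hB | hB <;> nlinarith

/-- At `x = 0` this vanishes, whatever `φ 0` is. -/
def radialField {E : Type*} [NormedAddCommGroup E] [NormedSpace ℝ E] (φ : ℝ → ℝ) (x : E) : E :=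
  (φ ‖x‖ / ‖x‖) • x

theorem mul_norm_radialField_sub_sq_le_inner {E : Type*} [NormedAddCommGroup E]
    [InnerProductSpace ℝ E] {f g : ℝ → ℝ} {c : ℝ} (hf0 : f 0 = 0) (hg0 : g 0 = 0)
    (hsub : ∀ a b, 0 ≤ b → b ≤ a → c * (g a - g b) ^ 2 ≤ (f a - f b) * (a - b))
    (hadd : ∀ a b, 0 ≤ a → 0 ≤ b → c * (g a + g b) ^ 2 ≤ (f a + f b) * (a + b)) (x y : E) :
    c * ‖radialField g x - radialField g y‖ ^ 2 ≤
      ⟪radialField f x - radialField f y, x - y⟫ := by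
  have hsub' : ∀ a b, 0 ≤ a → 0 ≤ b → c * (g a - g b) ^ 2 ≤ (f a - f b) * (a - b) := by
    intro a b ha hb
    rcases le_total b a with h | h
    · exact hsub a b hb h
    · linarith [hsub b a ha h]
  have hf : ∀ t, f t / t * t = f t := fun t => div_mul_cancel_of_imp (by rintro rfl; exact hf0)
  have hg : ∀ t, g t / t * t = g t := fun t => div_mul_cancel_of_imp (by rintro rfl; exact hg0)
  rw [← sub_nonneg]
  simp only [radialField, norm_sub_sq_real, norm_smul, inner_sub_left, inner_sub_right,
    real_inner_smul_left, real_inner_smul_right, real_inner_self_eq_norm_sq,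
    real_inner_comm x y, Real.norm_eq_abs, mul_pow, sq_abs]
  have hE₁ := hsub' _ _ (norm_nonneg x) (norm_nonneg y)
  have hE₂ := hadd _ _ (norm_nonneg x) (norm_nonneg y)
  rw [← hf ‖x‖, ← hf ‖y‖, ← hg ‖x‖, ← hg ‖y‖] at hE₁ hE₂
  have hs := abs_real_inner_le_norm x y
  set α := f ‖x‖ / ‖x‖
  set β := f ‖y‖ / ‖y‖
  set γ := g ‖x‖ / ‖x‖
  set δ := g ‖y‖ / ‖y‖
  set a := ‖x‖
  set b := ‖y‖
  have hdefect := sub_mul_nonneg_of_abs_le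
    (A := α * a ^ 2 + β * b ^ 2 - c * (γ ^ 2 * a ^ 2 + δ ^ 2 * b ^ 2))
    (B := α + β - 2 * c * γ * δ) (by linarith) (by linarith) hs
  linarith

lemma Hfun_eq_radialField {n : ℕ} (lam : ℝ) (ξ : EuclideanSpace ℝ (Fin n)) :
    Hfun lam ξ = radialField (fun t => max (t - 1) 0 ^ lam) ξ := by
  unfold Hfun radialField
  split_ifs with h <;> simp [h]

lemma max_sub_one_zero_rpow_sub_sq_le {p a b : ℝ} (hp : 2 ≤ p) (hba : b ≤ a) :
    4 / p ^ 2 * (max (a - 1) 0 ^ (p / 2) - max (b - 1) 0 ^ (p / 2)) ^ 2 ≤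
      (max (a - 1) 0 ^ (p - 1) - max (b - 1) 0 ^ (p - 1)) * (a - b) := by
  have hvu : max (b - 1) 0 ≤ max (a - 1) 0 := max_le_max (by linarith) le_rfl
  have hlip : max (a - 1) 0 - max (b - 1) 0 ≤ a - b :=
    (max_sub_max_le_max _ _ _ _).trans (by simp [hba])
  calc _ ≤ (max (a - 1) 0 ^ (p - 1) - max (b - 1) 0 ^ (p - 1)) * (max (a - 1) 0 - max (b - 1) 0) :=
        four_div_sq_mul_sq_rpow_sub_le hp (le_max_right _ _) hvu
    _ ≤ _ := by
        gcongr
        exact sub_nonneg.2 (Real.rpow_le_rpow (le_max_right _ _) hvu (by linarith))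

lemma max_sub_one_zero_rpow_add_sq_le {p a b : ℝ} (hp : 2 ≤ p) (ha : 0 ≤ a) (hb : 0 ≤ b) :
    4 / p ^ 2 * (max (a - 1) 0 ^ (p / 2) + max (b - 1) 0 ^ (p / 2)) ^ 2 ≤
      (max (a - 1) 0 ^ (p - 1) + max (b - 1) 0 ^ (p - 1)) * (a + b) := by
  have hc : 4 / p ^ 2 ≤ 1 := by
    rw [div_le_one (by positivity)]
    nlinarith
  calc _ ≤ (max (a - 1) 0 ^ (p / 2) + max (b - 1) 0 ^ (p / 2)) ^ 2 :=
        mul_le_of_le_one_left (sq_nonneg _) hc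
    _ ≤ (max (a - 1) 0 ^ (p - 1) + max (b - 1) 0 ^ (p - 1)) * (max (a - 1) 0 + max (b - 1) 0) :=
        sq_rpow_half_add_le (by positivity) (le_max_right _ _) (le_max_right _ _)
    _ ≤ _ := by
        gcongr
        · exact max_le (by linarith) ha
        · exact max_le (by linarith) hb

theorem stmt_5_general (n : ℕ) (p : ℝ) (hp : 2 ≤ p)
    (ξ η : EuclideanSpace ℝ (Fin n)) :
    4 / p ^ 2 * ‖Hfun (p / 2) ξ - Hfun (p / 2) η‖ ^ 2 ≤
      (inner ℝ (Hfun (p - 1) ξ - Hfun (p - 1) η) (ξ - η) : ℝ) := by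
  simp only [Hfun_eq_radialField]
  refine mul_norm_radialField_sub_sq_le_inner ?_ ?_
    (fun _ _ _ => max_sub_one_zero_rpow_sub_sq_le hp)
    (fun _ _ => max_sub_one_zero_rpow_add_sq_le hp) ξ η
  · norm_num [Real.zero_rpow (by linarith : p - 1 ≠ 0)]
  · norm_num [Real.zero_rpow (by linarith : p / 2 ≠ 0)]

/-- For `n ≥ 1` and `2 ≤ p < ∞`, for every `ξ, η ∈ ℝ^n`:
`⟨H_{p-1}(ξ) - H_{p-1}(η), ξ - η⟩ ≥ (4/p²) |H_{p/2}(ξ) - H_{p/2}(η)|²`. -/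
theorem stmt_5 (n : ℕ) (hn : 1 ≤ n) (p : ℝ) (hp : 2 ≤ p)
    (ξ η : EuclideanSpace ℝ (Fin n)) :
    4 / p ^ 2 * ‖Hfun (p / 2) ξ - Hfun (p / 2) η‖ ^ 2 ≤
      (inner ℝ (Hfun (p - 1) ξ - Hfun (p - 1) η) (ξ - η) : ℝ) :=
  stmt_5_general n p hp ξ η

end
end

section
/- Let n ≥ 1 and 2 ≤ p < ∞. Then for every ξ, η ∈ ℝ^n one has |H_{p−1}(ξ) − H_{p−1}(η)| ≤ (p−1) ( |H_{p/2}(ξ)|^{(p−2)/p} + |H_{p/2}(η)|^{(p−2)/p} ) |H_{p/2}(ξ) − H_{p/2}(η)|. -/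
open MeasureTheory Set ENNReal
open scoped Classical

noncomputable section

/-!
Writing `α = (p - 2)/p ∈ [0, 1)`, one has `H_{p-1}(ξ) = |H_{p/2}(ξ)|^α H_{p/2}(ξ)`, so the claim is
an instance of the estimate `‖‖A‖^α A - ‖B‖^α B‖ ≤ (1 + α)(‖A‖^α + ‖B‖^α)‖A - B‖`, valid in any
normed space for `0 ≤ α ≤ 1`, together with `1 + α ≤ p - 1`. For `‖B‖ ≤ ‖A‖` that estimate comes
from splitting `‖A‖^α A - ‖B‖^α B = ‖A‖^α (A - B) + (‖A‖^α - ‖B‖^α) B` and bounding the second term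
by the concavity of `t ↦ t^α` at `‖B‖`.
-/

lemma Real.rpow_sub_rpow_mul_le {α a b : ℝ} (h0 : 0 ≤ α) (h1 : α ≤ 1) (ha : 0 ≤ a)
    (hb : 0 ≤ b) : (a ^ α - b ^ α) * b ≤ α * b ^ α * (a - b) := by
  have amgm : a ^ α * b ^ (1 - α) ≤ α * a + (1 - α) * b :=
    Real.geom_mean_le_arith_mean2_weighted h0 (sub_nonneg.2 h1) ha hb (by ring)
  have hb_split : b ^ (1 - α) * b ^ α = b := by
    rw [← Real.rpow_add' hb (by norm_num), sub_add_cancel, Real.rpow_one]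
  have hbα : 0 ≤ b ^ α := Real.rpow_nonneg hb α
  calc (a ^ α - b ^ α) * b = a ^ α * b ^ (1 - α) * b ^ α - b ^ α * b := by
        rw [mul_assoc, hb_split]; ring
    _ ≤ (α * a + (1 - α) * b) * b ^ α - b ^ α * b := by gcongr
    _ = α * b ^ α * (a - b) := by ring

lemma norm_rpow_smul_sub_rpow_smul_le {E : Type*} [NormedAddCommGroup E] [NormedSpace ℝ E]
    {α : ℝ} (h0 : 0 ≤ α) (h1 : α ≤ 1) (A B : E) :
    ‖(‖A‖ ^ α) • A - (‖B‖ ^ α) • B‖ ≤ (1 + α) * (‖A‖ ^ α + ‖B‖ ^ α) * ‖A - B‖ := by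
  wlog hBA : ‖B‖ ≤ ‖A‖ generalizing A B
  · rw [norm_sub_rev, norm_sub_rev A, add_comm (‖A‖ ^ α)]
    exact this B A (le_of_not_ge hBA)
  have hAα : 0 ≤ ‖A‖ ^ α := Real.rpow_nonneg (norm_nonneg A) α
  have hBα : 0 ≤ ‖B‖ ^ α := Real.rpow_nonneg (norm_nonneg B) α
  have hαα : ‖B‖ ^ α ≤ ‖A‖ ^ α := Real.rpow_le_rpow (norm_nonneg B) hBA h0
  have hsplit : (‖A‖ ^ α) • A - (‖B‖ ^ α) • B
      = (‖A‖ ^ α) • (A - B) + (‖A‖ ^ α - ‖B‖ ^ α) • B := by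
    rw [smul_sub, sub_smul]; abel
  have concave : (‖A‖ ^ α - ‖B‖ ^ α) * ‖B‖ ≤ α * ‖B‖ ^ α * ‖A - B‖ :=
    (Real.rpow_sub_rpow_mul_le h0 h1 (norm_nonneg A) (norm_nonneg B)).trans
      (by gcongr; exact norm_sub_norm_le A B)
  calc ‖(‖A‖ ^ α) • A - (‖B‖ ^ α) • B‖
      ≤ ‖A‖ ^ α * ‖A - B‖ + (‖A‖ ^ α - ‖B‖ ^ α) * ‖B‖ := by
        rw [hsplit]
        refine (norm_add_le _ _).trans_eq ?_
        rw [norm_smul, norm_smul, Real.norm_of_nonneg hAα, Real.norm_of_nonneg (sub_nonneg.2 hαα)]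
    _ ≤ (‖A‖ ^ α + α * ‖B‖ ^ α) * ‖A - B‖ := by linarith
    _ ≤ (1 + α) * (‖A‖ ^ α + ‖B‖ ^ α) * ‖A - B‖ := by
        gcongr
        nlinarith [mul_nonneg h0 hAα]

lemma Hfun_zero {n : ℕ} (lam : ℝ) : Hfun lam (0 : EuclideanSpace ℝ (Fin n)) = 0 := by
  simp [Hfun]

lemma norm_Hfun {n : ℕ} (lam : ℝ) {ξ : EuclideanSpace ℝ (Fin n)} (hξ : ξ ≠ 0) :
    ‖Hfun lam ξ‖ = max (‖ξ‖ - 1) 0 ^ lam := by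
  have hξn : 0 < ‖ξ‖ := norm_pos_iff.2 hξ
  rw [Hfun, if_neg hξ, norm_smul,
    Real.norm_of_nonneg (div_nonneg (Real.rpow_nonneg (le_max_right _ _) _) hξn.le),
    div_mul_cancel₀ _ hξn.ne']

lemma Hfun_eq_norm_rpow_smul {n : ℕ} {lam μ r : ℝ} (hlam : lam ≠ 0) (h : μ * r + μ = lam)
    (ξ : EuclideanSpace ℝ (Fin n)) : Hfun lam ξ = (‖Hfun μ ξ‖ ^ r) • Hfun μ ξ := by
  by_cases hξ : ξ = 0
  · simp [hξ, Hfun_zero]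
  have hm : 0 ≤ max (‖ξ‖ - 1) 0 := le_max_right _ _
  rw [norm_Hfun μ hξ, Hfun, if_neg hξ, Hfun, if_neg hξ, smul_smul, ← Real.rpow_mul hm,
    ← mul_div_assoc, ← Real.rpow_add' hm (h ▸ hlam), h]

theorem stmt_6_general (n : ℕ) (p : ℝ) (hp : 2 ≤ p)
    (ξ η : EuclideanSpace ℝ (Fin n)) :
    ‖Hfun (p - 1) ξ - Hfun (p - 1) η‖ ≤
      (p - 1) * (‖Hfun (p / 2) ξ‖ ^ ((p - 2) / p) + ‖Hfun (p / 2) η‖ ^ ((p - 2) / p)) *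
        ‖Hfun (p / 2) ξ - Hfun (p / 2) η‖ := by
  have hp0 : 0 < p := by linarith
  have h0 : 0 ≤ (p - 2) / p := div_nonneg (by linarith) hp0.le
  have h1 : (p - 2) / p ≤ 1 := by rw [div_le_one hp0]; linarith
  have hconst : 1 + (p - 2) / p ≤ p - 1 := by
    linarith [div_le_self (by linarith : 0 ≤ p - 2) (by linarith : 1 ≤ p)]
  have hexp : p / 2 * ((p - 2) / p) + p / 2 = p - 1 := by field_simp; ring
  rw [Hfun_eq_norm_rpow_smul (by linarith) hexp ξ, Hfun_eq_norm_rpow_smul (by linarith) hexp η]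
  exact (norm_rpow_smul_sub_rpow_smul_le h0 h1 _ _).trans (by gcongr)

/-- For `n ≥ 1` and `2 ≤ p < ∞`, for every `ξ, η ∈ ℝ^n`:
`|H_{p-1}(ξ) - H_{p-1}(η)| ≤ (p-1)(|H_{p/2}(ξ)|^{(p-2)/p} + |H_{p/2}(η)|^{(p-2)/p}) |H_{p/2}(ξ) - H_{p/2}(η)|`. -/
theorem stmt_6 (n : ℕ) (hn : 1 ≤ n) (p : ℝ) (hp : 2 ≤ p)
    (ξ η : EuclideanSpace ℝ (Fin n)) :
    ‖Hfun (p - 1) ξ - Hfun (p - 1) η‖ ≤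
      (p - 1) * (‖Hfun (p / 2) ξ‖ ^ ((p - 2) / p) + ‖Hfun (p / 2) η‖ ^ ((p - 2) / p)) *
        ‖Hfun (p / 2) ξ - Hfun (p / 2) η‖ :=
  stmt_6_general n p hp ξ η

end
end
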